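/- Assume 𝔡 = 𝔠. Then Miller forcing has the incompatibility shrinking property: for every Miller tree T, every cardinal μ < 𝔠, and every family (S_α : α < μ) of Miller trees each incompatible with T, there is a Miller tree T' ⊆ T such that [T'] ∩ [S_α] = ∅ for all α < μ. -/

import Mathlib

/-- The restriction `x↾n` of a sequence `x ∈ ω^ω` to its first `n` values, as a finite sequence. -/
def seqRestrict (x : ℕ → ℕ) (n : ℕ) : List ℕ := List.ofFn fun i : Fin n => x i

/-- A tree on `ω`: a nonempty set of finite sequences closed under initial segments. -/
def IsSeqTree (T : Set (List ℕ)) : Prop :=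
  T.Nonempty ∧ ∀ s ∈ T, ∀ t : List ℕ, t <+: s → t ∈ T

/-- `[T]`, the set of branches of a tree `T ⊆ ω^{<ω}`. -/
def branches (T : Set (List ℕ)) : Set (ℕ → ℕ) := {x | ∀ n : ℕ, seqRestrict x n ∈ T}

/-- `S` and `T` are compatible in `𝕋` (ordered by inclusion) if they have a common extension. -/
def Compat (𝕋 : Set (Set (List ℕ))) (S T : Set (List ℕ)) : Prop :=
  ∃ R ∈ 𝕋, R ⊆ S ∧ R ⊆ T

/-- A Miller tree: a tree in which every node has an extension with infinitely many
immediate successors in the tree. -/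
def IsMiller (T : Set (List ℕ)) : Prop :=
  IsSeqTree T ∧ ∀ t ∈ T, ∃ s ∈ T, t <+: s ∧ {n : ℕ | s ++ [n] ∈ T}.Infinite

/-- The dominating number `𝔡`: the least cardinality of a family `F ⊆ ω^ω` dominating with
respect to eventual domination `≤*`. -/
noncomputable def dominatingNumber : Cardinal :=
  sInf {c : Cardinal | ∃ F : Set (ℕ → ℕ), Cardinal.mk F = c ∧
    ∀ g : ℕ → ℕ, ∃ f ∈ F, ∀ᶠ n in Filter.atTop, g n ≤ f n}

/-!
Fix a canonical skeleton of `T`, sending the address `q ++ [n]` to a splitting node above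
`skeleton T q ++ [n]`, and let `T'` keep only the choices `n ≥ g k` at the `k`-th splitting node.
Each `T ∩ S a` has no Miller subtree, so its branches are σ-bounded: otherwise the nodes whose
cylinders are not σ-bounded would form a Miller subtree. A branch of `T'` bounded by `f` follows
the skeleton through finitely many possible addresses, so its value right after the `k`-th
splitting is at most `skeletonBound T f k`. Fewer than `𝔠 = 𝔡` functions `skeletonBound T f`
arise, so they do not dominate and `g` can be chosen to exceed each of them somewhere; then no
branch of `T'` is bounded by any of the `f`, hence none lies in any `[S a]`.
-/

universe u

section Sequences

variable {x : ℕ → ℕ}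

@[simp] lemma length_seqRestrict (x : ℕ → ℕ) (n : ℕ) : (seqRestrict x n).length = n := by
  simp [seqRestrict]

lemma getD_seqRestrict {m n : ℕ} (h : m < n) : (seqRestrict x n).getD m 0 = x m := by
  simp [seqRestrict, h]

lemma seqRestrict_succ (x : ℕ → ℕ) (n : ℕ) : seqRestrict x (n + 1) = seqRestrict x n ++ [x n] := by
  simp only [seqRestrict, List.ofFn_succ', List.concat_eq_append, Fin.val_castSucc, Fin.val_last]

lemma take_seqRestrict {m n : ℕ} (h : m ≤ n) : (seqRestrict x n).take m = seqRestrict x m := by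
  apply List.ext_getElem (by simp [h])
  intro i _ _
  simp [seqRestrict]

lemma seqRestrict_prefix_seqRestrict {m n : ℕ} (h : m ≤ n) :
    seqRestrict x m <+: seqRestrict x n := by
  rw [← take_seqRestrict h]
  exact List.take_prefix _ _

lemma prefix_seqRestrict_iff {l : List ℕ} {n : ℕ} :
    l <+: seqRestrict x n ↔ l.length ≤ n ∧ seqRestrict x l.length = l := by
  refine ⟨fun h => ⟨by simpa using h.length_le, ?_⟩, fun ⟨hn, hl⟩ => ?_⟩
  · conv_rhs => rw [List.prefix_iff_eq_take.mp h]
    rw [take_seqRestrict (by simpa using h.length_le)]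
  · exact hl ▸ seqRestrict_prefix_seqRestrict hn

def seqCylinder (t : List ℕ) : Set (ℕ → ℕ) := {x | seqRestrict x t.length = t}

lemma mem_seqCylinder_iff_prefix {t : List ℕ} {n : ℕ} (hn : t.length ≤ n) :
    x ∈ seqCylinder t ↔ t <+: seqRestrict x n := by
  simp [seqCylinder, prefix_seqRestrict_iff, hn]

lemma mem_seqCylinder_seqRestrict (x : ℕ → ℕ) (n : ℕ) : x ∈ seqCylinder (seqRestrict x n) := by
  simp [seqCylinder]

lemma eq_of_append_singleton_prefix {t l : List ℕ} {a b : ℕ} (ha : t ++ [a] <+: l)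
    (hb : t ++ [b] <+: l) : a = b := by
  have := (List.prefix_of_prefix_length_le ha hb (by simp)).eq_of_length (by simp)
  simpa using this

lemma IsSeqTree.nil_mem {T : Set (List ℕ)} (hT : IsSeqTree T) : [] ∈ T :=
  let ⟨s, hs⟩ := hT.1
  hT.2 s hs [] List.nil_prefix

lemma IsSeqTree.inter {S T : Set (List ℕ)} (hS : IsSeqTree S) (hT : IsSeqTree T) :
    IsSeqTree (S ∩ T) :=
  ⟨⟨[], hS.nil_mem, hT.nil_mem⟩, fun s hs t ht => ⟨hS.2 s hs.1 t ht, hT.2 s hs.2 t ht⟩⟩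

lemma branches_inter (S T : Set (List ℕ)) : branches (S ∩ T) = branches S ∩ branches T := by
  ext x
  simp [branches, forall_and]

def children (T : Set (List ℕ)) (t : List ℕ) : Set ℕ := {n | t ++ [n] ∈ T}

end Sequences

section SigmaBounded

def IsSigmaBounded (A : Set (ℕ → ℕ)) : Prop :=
  ∃ C : Set (ℕ → ℕ), C.Countable ∧ ∀ x ∈ A, ∃ f ∈ C, x ≤ f

lemma isSigmaBounded_of_forall_le {A : Set (ℕ → ℕ)} {f : ℕ → ℕ} (h : ∀ x ∈ A, x ≤ f) :
    IsSigmaBounded A :=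
  ⟨{f}, Set.countable_singleton f, fun x hx => ⟨f, rfl, h x hx⟩⟩

lemma IsSigmaBounded.mono {A B : Set (ℕ → ℕ)} (hB : IsSigmaBounded B) (h : A ⊆ B) :
    IsSigmaBounded A :=
  let ⟨C, hC, hBC⟩ := hB
  ⟨C, hC, fun x hx => hBC x (h hx)⟩

lemma IsSigmaBounded.union {A B : Set (ℕ → ℕ)} (hA : IsSigmaBounded A)
    (hB : IsSigmaBounded B) : IsSigmaBounded (A ∪ B) := by
  obtain ⟨C, hC, hAC⟩ := hA
  obtain ⟨D, hD, hBD⟩ := hB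
  refine ⟨C ∪ D, hC.union hD, ?_⟩
  rintro x (hx | hx)
  · obtain ⟨f, hf, hxf⟩ := hAC x hx
    exact ⟨f, Or.inl hf, hxf⟩
  · obtain ⟨f, hf, hxf⟩ := hBD x hx
    exact ⟨f, Or.inr hf, hxf⟩

lemma isSigmaBounded_biUnion {ι : Type*} {s : Set ι} (hs : s.Countable) {A : ι → Set (ℕ → ℕ)}
    (h : ∀ i ∈ s, IsSigmaBounded (A i)) : IsSigmaBounded (⋃ i ∈ s, A i) := by
  choose C hC hAC using h
  refine ⟨⋃ i, ⋃ hi : i ∈ s, C i hi, hs.biUnion hC, ?_⟩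
  intro x hx
  obtain ⟨i, hi, hxi⟩ := Set.mem_iUnion₂.mp hx
  obtain ⟨f, hf, hxf⟩ := hAC i hi x hxi
  exact ⟨f, Set.mem_iUnion₂.mpr ⟨i, hi, hf⟩, hxf⟩

end SigmaBounded

section FinitelyBranching

variable {R : Set (List ℕ)} {b : List ℕ}

def levelAbove (R : Set (List ℕ)) (b : List ℕ) (k : ℕ) : Set (List ℕ) :=
  {s ∈ R | b <+: s ∧ s.length = b.length + k}

lemma finite_levelAbove (hR : ∀ s ∈ R, ∀ t, t <+: s → t ∈ R)
    (hfin : ∀ s, b <+: s → (children R s).Finite) (k : ℕ) : (levelAbove R b k).Finite := by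
  induction k with
  | zero =>
    refine (Set.finite_singleton b).subset fun s ⟨_, hbs, hlen⟩ => ?_
    exact (hbs.eq_of_length (by omega)).symm
  | succ k ih =>
    refine (ih.biUnion fun p hp => (hfin p hp.2.1).image (p ++ [·])).subset ?_
    rintro s ⟨hs, hbs, hlen⟩
    obtain ⟨p, a, rfl⟩ := (List.eq_nil_or_concat' s).resolve_left (by rintro rfl; simp at hlen)
    have hp : p <+: p ++ [a] := List.prefix_append p [a]
    have hplen : p.length = b.length + k := by simp at hlen; omega
    exact Set.mem_biUnion ⟨hR _ hs p hp, List.prefix_of_prefix_length_le hbs hp (by omega), hplen⟩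
      ⟨a, hs, rfl⟩

lemma exists_forall_le_of_finite_children (hR : ∀ s ∈ R, ∀ t, t <+: s → t ∈ R)
    (hfin : ∀ s, b <+: s → (children R s).Finite) :
    ∃ f : ℕ → ℕ, ∀ x ∈ branches R ∩ seqCylinder b, x ≤ f := by
  refine ⟨fun m => sSup ((fun s => s.getD m 0) '' levelAbove R b (m + 1 - b.length)), ?_⟩
  rintro x ⟨hxR, hxb⟩ m
  have hmem : seqRestrict x (b.length + (m + 1 - b.length)) ∈ levelAbove R b (m + 1 - b.length) :=
    ⟨hxR _, (mem_seqCylinder_iff_prefix (by omega)).mp hxb, by simp⟩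
  rw [← getD_seqRestrict (x := x) (n := b.length + (m + 1 - b.length)) (by omega)]
  exact le_csSup ((finite_levelAbove hR hfin _).image _).bddAbove ⟨_, hmem, rfl⟩

end FinitelyBranching

section Dichotomy

variable {Q : Set (List ℕ)}

def IsUnboundedNode (Q : Set (List ℕ)) (t : List ℕ) : Prop :=
  t ∈ Q ∧ ¬ IsSigmaBounded (branches Q ∩ seqCylinder t)

def unboundedCore (Q : Set (List ℕ)) : Set (List ℕ) :=
  {u | ∃ b, IsUnboundedNode Q b ∧ u <+: b}

lemma unboundedCore_prefix_closed : ∀ s ∈ unboundedCore Q, ∀ t, t <+: s → t ∈ unboundedCore Q :=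
  fun _ ⟨b, hb, hsb⟩ _ hts => ⟨b, hb, hts.trans hsb⟩

lemma exists_infinite_children_unboundedCore {b : List ℕ} (hb : IsUnboundedNode Q b) :
    ∃ s, b <+: s ∧ (children (unboundedCore Q) s).Infinite := by
  by_contra! hfin
  -- A branch through `b` either stays in the core, which is finitely branching above `b`, or
  -- leaves it at a node of `Q` whose cylinder is σ-bounded.
  obtain ⟨f, hf⟩ := exists_forall_le_of_finite_children unboundedCore_prefix_closed hfin
  have hleave : IsSigmaBounded
      (⋃ u ∈ {u | u ∈ Q ∧ ¬ IsUnboundedNode Q u}, branches Q ∩ seqCylinder u) :=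
    isSigmaBounded_biUnion (Set.to_countable _) fun u hu => not_not.mp (not_and.mp hu.2 hu.1)
  refine hb.2 (((isSigmaBounded_of_forall_le hf).union hleave).mono ?_)
  rintro x ⟨hxQ, hxb⟩
  by_cases hx : x ∈ branches (unboundedCore Q)
  · exact Or.inl ⟨hx, hxb⟩
  · obtain ⟨n, hn⟩ : ∃ n, seqRestrict x n ∉ unboundedCore Q := by simpa [branches] using hx
    exact Or.inr <| Set.mem_biUnion ⟨hxQ n, fun hu => hn ⟨_, hu, List.prefix_refl _⟩⟩
      ⟨hxQ, mem_seqCylinder_seqRestrict x n⟩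

theorem exists_isMiller_subset_of_not_isSigmaBounded (hQ : IsSeqTree Q)
    (h : ¬ IsSigmaBounded (branches Q)) : ∃ R, IsMiller R ∧ R ⊆ Q := by
  have hroot : IsUnboundedNode Q [] := ⟨hQ.nil_mem, by simpa [seqCylinder, seqRestrict] using h⟩
  refine ⟨unboundedCore Q, ⟨⟨⟨[], [], hroot, List.nil_prefix⟩, unboundedCore_prefix_closed⟩, ?_⟩, ?_⟩
  · rintro u ⟨b, hb, hub⟩
    obtain ⟨s, hbs, hs⟩ := exists_infinite_children_unboundedCore hb
    obtain ⟨n, hn⟩ := hs.nonempty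
    exact ⟨s, unboundedCore_prefix_closed _ hn s (List.prefix_append s [n]), hub.trans hbs, hs⟩
  · rintro u ⟨b, hb, hub⟩
    exact hQ.2 b hb.1 u hub

end Dichotomy

section Skeleton

variable {T : Set (List ℕ)}

open Classical in
noncomputable def splitAbove (T : Set (List ℕ)) (t : List ℕ) : List ℕ :=
  if h : ∃ s ∈ T, t <+: s ∧ (children T s).Infinite then h.choose else t

lemma prefix_splitAbove (T : Set (List ℕ)) (t : List ℕ) : t <+: splitAbove T t := by
  unfold splitAbove
  split_ifs with h
  · exact h.choose_spec.2.1
  · exact List.prefix_refl t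

lemma splitAbove_spec (hT : IsMiller T) {t : List ℕ} (ht : t ∈ T) :
    splitAbove T t ∈ T ∧ (children T (splitAbove T t)).Infinite := by
  have h : ∃ s ∈ T, t <+: s ∧ (children T s).Infinite := hT.2 t ht
  rw [splitAbove, dif_pos h]
  exact ⟨h.choose_spec.1, h.choose_spec.2.2⟩

noncomputable def skeletonFrom (T : Set (List ℕ)) (t q : List ℕ) : List ℕ :=
  q.foldl (fun s n => splitAbove T (s ++ [n])) t

noncomputable def skeleton (T : Set (List ℕ)) (q : List ℕ) : List ℕ :=
  skeletonFrom T (splitAbove T []) q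

lemma prefix_skeletonFrom (t q : List ℕ) : t <+: skeletonFrom T t q := by
  induction q generalizing t with
  | nil => exact List.prefix_refl t
  | cons n q ih => exact (List.prefix_append t [n]).trans ((prefix_splitAbove T _).trans (ih _))

lemma prefix_of_skeletonFrom_prefix {t q q' : List ℕ}
    (h : skeletonFrom T t q <+: skeletonFrom T t q') : q <+: q' := by
  induction q generalizing t q' with
  | nil => exact List.nil_prefix
  | cons n q ih =>
    have hn : t ++ [n] <+: skeletonFrom T t q' :=
      ((prefix_splitAbove T _).trans (prefix_skeletonFrom _ q)).trans h
    cases q' with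
    | nil => simpa [skeletonFrom] using hn.length_le
    | cons m q' =>
      have hm : t ++ [m] <+: skeletonFrom T t (m :: q') :=
        (prefix_splitAbove T _).trans (prefix_skeletonFrom _ q')
      obtain rfl := eq_of_append_singleton_prefix hn hm
      exact (List.prefix_cons_inj n).mpr (ih h)

lemma skeleton_append_singleton (q : List ℕ) (n : ℕ) :
    skeleton T (q ++ [n]) = splitAbove T (skeleton T q ++ [n]) := by
  simp [skeleton, skeletonFrom, List.foldl_append]

lemma prefix_skeleton_append_singleton (q : List ℕ) (n : ℕ) :
    skeleton T q ++ [n] <+: skeleton T (q ++ [n]) := by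
  rw [skeleton_append_singleton]
  exact prefix_splitAbove T _

lemma skeleton_prefix_skeleton {q q' : List ℕ} (h : q <+: q') : skeleton T q <+: skeleton T q' := by
  obtain ⟨r, rfl⟩ := h
  simp only [skeleton, skeletonFrom, List.foldl_append]
  exact prefix_skeletonFrom _ r

lemma prefix_of_skeleton_prefix {q q' : List ℕ} (h : skeleton T q <+: skeleton T q') : q <+: q' :=
  prefix_of_skeletonFrom_prefix h

def IsSkeletonPath (T : Set (List ℕ)) (g : ℕ → ℕ) (q : List ℕ) : Prop :=
  ∀ p n, p ++ [n] <+: q → skeleton T p ++ [n] ∈ T ∧ g p.length ≤ n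

variable {g : ℕ → ℕ} {q : List ℕ}

lemma isSkeletonPath_nil : IsSkeletonPath T g [] :=
  fun p n h => by simpa using h.length_le

lemma IsSkeletonPath.of_prefix {q' : List ℕ} (h : IsSkeletonPath T g q') (hq : q <+: q') :
    IsSkeletonPath T g q :=
  fun p n hp => h p n (hp.trans hq)

lemma IsSkeletonPath.append_singleton {n : ℕ} (h : IsSkeletonPath T g q)
    (hn : skeleton T q ++ [n] ∈ T) (hg : g q.length ≤ n) : IsSkeletonPath T g (q ++ [n]) := by
  intro p m hp
  rcases List.prefix_concat_iff.mp hp with heq | hp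
  · obtain ⟨rfl, hmn⟩ := List.append_inj' heq rfl
    obtain rfl : m = n := by simpa using hmn
    exact ⟨hn, hg⟩
  · exact h p m hp

lemma IsSkeletonPath.skeleton_spec (hT : IsMiller T) (h : IsSkeletonPath T g q) :
    skeleton T q ∈ T ∧ (children T (skeleton T q)).Infinite := by
  induction q using List.reverseRecOn with
  | nil => exact splitAbove_spec hT hT.1.nil_mem
  | append_singleton p n _ =>
    rw [skeleton_append_singleton]
    exact splitAbove_spec hT (h p n (List.prefix_refl _)).1

end Skeleton

section SkeletonTree

variable {T : Set (List ℕ)} {g : ℕ → ℕ} {x : ℕ → ℕ}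

def skeletonTree (T : Set (List ℕ)) (g : ℕ → ℕ) : Set (List ℕ) :=
  {s | ∃ q, IsSkeletonPath T g q ∧ s <+: skeleton T q}

lemma skeletonTree_subset (hT : IsMiller T) : skeletonTree T g ⊆ T :=
  fun s ⟨_, hq, hs⟩ => hT.1.2 _ (hq.skeleton_spec hT).1 s hs

lemma isMiller_skeletonTree (hT : IsMiller T) : IsMiller (skeletonTree T g) := by
  refine ⟨⟨⟨[], [], isSkeletonPath_nil, List.nil_prefix⟩,
    fun s ⟨q, hq, hs⟩ t hts => ⟨q, hq, hts.trans hs⟩⟩, ?_⟩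
  rintro t ⟨q, hq, htq⟩
  refine ⟨skeleton T q, ⟨q, hq, List.prefix_refl _⟩, htq, ?_⟩
  refine ((hq.skeleton_spec hT).2.sdiff (Set.finite_lt_nat (g q.length))).mono ?_
  rintro n ⟨hn, hgn⟩
  exact ⟨q ++ [n], hq.append_singleton hn (not_lt.mp hgn), prefix_skeleton_append_singleton q n⟩

lemma mem_seqCylinder_of_prefix {t l : List ℕ} {M : ℕ} (hx : seqRestrict x M <+: l)
    (ht : t <+: l) (hM : t.length ≤ M) : x ∈ seqCylinder t :=
  (mem_seqCylinder_iff_prefix hM).mpr (List.prefix_of_prefix_length_le ht hx (by simpa using hM))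

lemma mem_seqCylinder_skeleton_nil (hx : x ∈ branches (skeletonTree T g)) :
    x ∈ seqCylinder (skeleton T []) :=
  let ⟨_, _, hxq⟩ := hx (skeleton T []).length
  mem_seqCylinder_of_prefix hxq (skeleton_prefix_skeleton List.nil_prefix) le_rfl

lemma isSkeletonPath_append_and_mem_seqCylinder {q : List ℕ}
    (hx : x ∈ branches (skeletonTree T g)) (hqx : x ∈ seqCylinder (skeleton T q)) :
    IsSkeletonPath T g (q ++ [x (skeleton T q).length]) ∧
      x ∈ seqCylinder (skeleton T (q ++ [x (skeleton T q).length])) := by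
  -- A long initial segment of `x` lies below the skeleton node of some path `q'`; by injectivity
  -- of the skeleton `q'` extends `q`, and its next entry must be `n`.
  set n := x (skeleton T q).length
  set M := (skeleton T (q ++ [n])).length
  obtain ⟨q', hq', hxq'⟩ := hx (M + 1)
  have hM : (skeleton T q).length + 1 ≤ M := by
    simpa using (prefix_skeleton_append_singleton (T := T) q n).length_le
  have hqn : skeleton T q ++ [n] <+: skeleton T q' := by
    have : seqRestrict x ((skeleton T q).length + 1) = skeleton T q ++ [n] := by
      rw [seqRestrict_succ, hqx]
    exact this ▸ (seqRestrict_prefix_seqRestrict (by omega)).trans hxq'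
  obtain ⟨m, hm⟩ : ∃ m, q ++ [m] <+: q' := by
    obtain ⟨r, rfl⟩ := prefix_of_skeleton_prefix ((List.prefix_append _ _).trans hqn)
    cases r with
    | nil =>
      have := hxq'.length_le
      simp only [length_seqRestrict, List.append_nil] at this
      omega
    | cons m r => exact ⟨m, by simp⟩
  have hmn : m = n := eq_of_append_singleton_prefix
    ((prefix_skeleton_append_singleton q m).trans (skeleton_prefix_skeleton hm)) hqn
  rw [hmn] at hm
  exact ⟨hq'.of_prefix hm,
    mem_seqCylinder_of_prefix hxq' (skeleton_prefix_skeleton hm) (Nat.le_succ M)⟩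

end SkeletonTree

section Escape

variable {T : Set (List ℕ)} {g : ℕ → ℕ} {x : ℕ → ℕ}

noncomputable def boundedPaths (T : Set (List ℕ)) (f : ℕ → ℕ) : ℕ → Finset (List ℕ)
  | 0 => {[]}
  | k + 1 => (boundedPaths T f k).biUnion fun q =>
      (Finset.range (f (skeleton T q).length + 1)).image (q ++ [·])

/-- The largest value `f` takes at the position of the `k`-th splitting along a branch that is
bounded by `f`; only finitely many skeleton paths of length `k` are compatible with `f`. -/
noncomputable def skeletonBound (T : Set (List ℕ)) (f : ℕ → ℕ) (k : ℕ) : ℕ :=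
  (boundedPaths T f k).sup fun q => f (skeleton T q).length

lemma append_singleton_mem_boundedPaths {f : ℕ → ℕ} {k n : ℕ} {q : List ℕ}
    (hq : q ∈ boundedPaths T f k) (hn : n ≤ f (skeleton T q).length) :
    q ++ [n] ∈ boundedPaths T f (k + 1) := by
  simp only [boundedPaths, Finset.mem_biUnion, Finset.mem_image, Finset.mem_range]
  exact ⟨q, hq, n, by omega, rfl⟩

theorem not_le_of_mem_branches_skeletonTree (hx : x ∈ branches (skeletonTree T g)) {f : ℕ → ℕ}
    (hg : ∃ k, skeletonBound T f k < g k) : ¬ x ≤ f := by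
  intro hxf
  obtain ⟨k, hk⟩ := hg
  have hfollow : ∀ k, ∃ q ∈ boundedPaths T f k, q.length = k ∧ x ∈ seqCylinder (skeleton T q) := by
    intro k
    induction k with
    | zero => exact ⟨[], by simp [boundedPaths], rfl, mem_seqCylinder_skeleton_nil hx⟩
    | succ k ih =>
      obtain ⟨q, hqP, rfl, hqx⟩ := ih
      exact ⟨_, append_singleton_mem_boundedPaths hqP (hxf _), by simp,
        (isSkeletonPath_append_and_mem_seqCylinder hx hqx).2⟩
  obtain ⟨q, hqP, rfl, hqx⟩ := hfollow k
  have hgx : g q.length ≤ x (skeleton T q).length :=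
    ((isSkeletonPath_append_and_mem_seqCylinder hx hqx).1 q _ (List.prefix_refl _)).2
  have hfb : f (skeleton T q).length ≤ skeletonBound T f q.length :=
    Finset.le_sup (f := fun q => f (skeleton T q).length) hqP
  have hxf' : x (skeleton T q).length ≤ f (skeleton T q).length := hxf _
  omega

end Escape

lemma exists_forall_exists_lt_of_mk_lt_dominatingNumber {D : Set (ℕ → ℕ)}
    (hD : Cardinal.mk D < dominatingNumber) : ∃ g : ℕ → ℕ, ∀ f ∈ D, ∃ k, f k < g k := by
  by_contra! h
  refine hD.not_ge (csInf_le' ⟨D, rfl, fun g => ?_⟩)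
  obtain ⟨f, hf, hgf⟩ := h g
  exact ⟨f, hf, Filter.Eventually.of_forall hgf⟩

lemma Cardinal.mk_iUnion_lt_of_countable {α ι : Type u} {C : ι → Set α} {c : Cardinal}
    (hc : Cardinal.aleph0 < c) (hι : Cardinal.mk ι < c) (hC : ∀ i, (C i).Countable) :
    Cardinal.mk (⋃ i, C i) < c :=
  calc Cardinal.mk (⋃ i, C i) ≤ Cardinal.mk ι * ⨆ i, Cardinal.mk (C i) := Cardinal.mk_iUnion_le C
    _ ≤ Cardinal.mk ι * Cardinal.aleph0 := by
      gcongr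
      exact ciSup_le' fun i => Cardinal.le_aleph0_iff_set_countable.mpr (hC i)
    _ < c := Cardinal.mul_lt_of_lt hc.le hι hc

/-- Assuming `𝔡 = 𝔠`, Miller forcing has the incompatibility shrinking property: for every
Miller tree `T` and every family of fewer than continuum many Miller trees each incompatible
with `T`, there is a Miller tree `T' ⊆ T` whose branch set avoids all their branch sets. -/
theorem miller_incompatShrinking_of_d_eq_c (hd : dominatingNumber = Cardinal.continuum)
    (T : Set (List ℕ)) (hT : IsMiller T)
    (ι : Type) (hcard : Cardinal.mk ι < Cardinal.continuum)
    (S : ι → Set (List ℕ)) (hS : ∀ a : ι, IsMiller (S a))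
    (hincompat : ∀ a : ι, ¬ ∃ R : Set (List ℕ), IsMiller R ∧ R ⊆ T ∧ R ⊆ S a) :
    ∃ T' : Set (List ℕ), IsMiller T' ∧ T' ⊆ T ∧
      ∀ a : ι, branches T' ∩ branches (S a) = ∅ := by
  have hbounded : ∀ a, IsSigmaBounded (branches (T ∩ S a)) := fun a => by
    by_contra h
    obtain ⟨R, hR, hRTS⟩ := exists_isMiller_subset_of_not_isSigmaBounded (hT.1.inter (hS a).1) h
    exact hincompat a ⟨R, hR, Set.subset_inter_iff.mp hRTS⟩
  choose C hC hCS using hbounded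
  have hD : Cardinal.mk (⋃ a, C a) < dominatingNumber :=
    hd ▸ Cardinal.mk_iUnion_lt_of_countable Cardinal.aleph0_lt_continuum hcard hC
  obtain ⟨g, hg⟩ := exists_forall_exists_lt_of_mk_lt_dominatingNumber
    (Cardinal.mk_image_le.trans_lt hD : Cardinal.mk (skeletonBound T '' ⋃ a, C a) < _)
  refine ⟨skeletonTree T g, isMiller_skeletonTree hT, skeletonTree_subset hT, fun a => ?_⟩
  refine Set.eq_empty_of_forall_notMem fun x ⟨hxT', hxS⟩ => ?_
  have hxTS : x ∈ branches (T ∩ S a) :=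
    (branches_inter T (S a)).symm ▸ ⟨fun n => skeletonTree_subset hT (hxT' n), hxS⟩
  obtain ⟨f, hfC, hxf⟩ := hCS a x hxTS
  exact not_le_of_mem_branches_skeletonTree hxT' (hg _ ⟨f, Set.mem_iUnion_of_mem a hfC, rfl⟩) hxf
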